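/- Fix S, K, σ > 0 with let Φ be the standard normal cumulative distribution function, and for τ > 0 set d1(τ) = (ln(S/K) + (σ²/2)τ)/(σ√τ) and d2(τ) = d1(τ) − σ√τ. Then the RMM-01 LPT value V(τ) = S·Φ(−d1(τ)) + K·Φ(d2(τ)) tends to min(S, K) as τ tends to 0 from the right. That is, at expiry the LPT replicates the covered call payoff min(S, K). -/

import Mathlib

open Real Filter

/-- The cumulative distribution function of the standard normal distribution
(Gaussian measure on ℝ with mean 0 and variance 1). -/
noncomputable def Φ (x : ℝ) : ℝ :=
  (ProbabilityTheory.gaussianReal 0 1 (Set.Iic x)).toReal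

/-! With `s = √τ` and `c = log (S / K) / σ` one has `d1 = c / s + σ s / 2` and
`d2 = c / s - σ s / 2`. As `s → 0⁺` both tend to `+∞`, `-∞` or `0` according to the sign of `c`,
i.e. of `S - K`, so `Φ (-d1)` and `Φ (d2)` tend to `0`, `1` or `1 / 2` (the last by symmetry of
the Gaussian), and the weighted sum `S Φ (-d1) + K Φ (d2)` tends to `min S K` in each case. -/

open MeasureTheory ProbabilityTheory Topology Set

namespace ProbabilityTheory

variable (μ : Measure ℝ) [IsProbabilityMeasure μ] [NullSingletonClass μ]

lemma continuous_cdf : Continuous (cdf μ) := by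
  refine continuous_iff_continuousAt.2 fun x => ?_
  rw [(cdf μ).mono.continuousAt_iff_leftLim_eq_rightLim, (cdf μ).rightLim_eq]
  have hjump : ENNReal.ofReal (cdf μ x - Function.leftLim (cdf μ) x) = 0 := by
    rw [← StieltjesFunction.measure_singleton, measure_cdf, measure_singleton]
  have hle := (cdf μ).mono.leftLim_le (le_refl x)
  rw [ENNReal.ofReal_eq_zero] at hjump
  linarith

lemma cdf_neg (hμ : μ.map Neg.neg = μ) (x : ℝ) : cdf μ (-x) = 1 - cdf μ x := by
  have hreflect : μ (Iic (-x)) = μ (Ici x) := by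
    conv_lhs => rw [← hμ]
    rw [Measure.map_apply measurable_neg measurableSet_Iic]
    congr 1
    ext y
    simp
  rw [cdf_eq_real, cdf_eq_real, measureReal_def, hreflect, ← measureReal_def,
    ← measureReal_congr Ioi_ae_eq_Ici, ← compl_Iic, measureReal_compl measurableSet_Iic,
    probReal_univ]

end ProbabilityTheory

lemma nullSingletonClass_gaussianReal (m : ℝ) {v : NNReal} (hv : v ≠ 0) :
    NullSingletonClass (gaussianReal m v) :=
  ⟨fun x => gaussianReal_absolutelyContinuous m hv (measure_singleton x)⟩

lemma Phi_eq_cdf : Φ = cdf (gaussianReal 0 1) :=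
  funext fun x => (cdf_eq_real _ x).symm

lemma continuous_Phi : Continuous Φ := by
  have := nullSingletonClass_gaussianReal 0 one_ne_zero
  rw [Phi_eq_cdf]
  exact continuous_cdf _

lemma Phi_zero : Φ 0 = 1 / 2 := by
  have := nullSingletonClass_gaussianReal 0 one_ne_zero
  have hsymm := cdf_neg (gaussianReal 0 1) ?_ 0
  · rw [neg_zero, ← Phi_eq_cdf] at hsymm
    linarith
  · simpa using gaussianReal_map_neg (μ := 0) (v := 1)

lemma tendsto_Phi_atTop : Tendsto Φ atTop (𝓝 1) :=
  Phi_eq_cdf ▸ tendsto_cdf_atTop _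

lemma tendsto_Phi_atBot : Tendsto Φ atBot (𝓝 0) :=
  Phi_eq_cdf ▸ tendsto_cdf_atBot _

lemma tendsto_Phi_mul_inv_add_mul (c b : ℝ) :
    Tendsto (fun s => Φ (c * s⁻¹ + b * s)) (𝓝[>] 0) (𝓝 ((1 + Real.sign c) / 2)) := by
  have hlin : Tendsto (fun s => b * s) (𝓝[>] 0) (𝓝 0) := by
    simpa using tendsto_nhdsWithin_of_tendsto_nhds ((continuous_const_mul b).tendsto 0)
  rcases lt_trichotomy c 0 with hc | rfl | hc
  · rw [Real.sign_of_neg hc, add_neg_cancel, zero_div]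
    exact tendsto_Phi_atBot.comp ((tendsto_inv_nhdsGT_zero.const_mul_atTop_of_neg hc).atBot_add hlin)
  · rw [Real.sign_zero, add_zero, ← Phi_zero]
    exact (continuous_Phi.tendsto 0).comp hlin |>.congr fun s => by simp
  · rw [Real.sign_of_pos hc, one_add_one_eq_two, div_self two_ne_zero]
    exact tendsto_Phi_atTop.comp ((tendsto_inv_nhdsGT_zero.const_mul_atTop hc).atTop_add hlin)

lemma tendsto_sqrt_nhdsGT_zero : Tendsto sqrt (𝓝[>] 0) (𝓝[>] 0) :=
  tendsto_nhdsWithin_iff.2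
    ⟨tendsto_nhdsWithin_of_tendsto_nhds (by simpa using continuous_sqrt.tendsto 0),
      eventually_mem_nhdsWithin.mono fun _ hτ => sqrt_pos.2 hτ⟩

lemma mul_add_mul_sign_log_div_eq_min {S K σ : ℝ} (hS : 0 < S) (hK : 0 < K) (hσ : 0 < σ) :
    S * ((1 + Real.sign (-(log (S / K) / σ))) / 2) + K * ((1 + Real.sign (log (S / K) / σ)) / 2)
      = min S K := by
  rw [Real.sign_neg]
  rcases lt_trichotomy S K with h | rfl | h
  · have hc : log (S / K) / σ < 0 :=
      div_neg_of_neg_of_pos (log_neg (div_pos hS hK) ((div_lt_one hK).2 h)) hσ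
    rw [Real.sign_of_neg hc, min_eq_left h.le]
    ring
  · rw [div_self hK.ne', log_one, zero_div, Real.sign_zero, min_self]
    ring
  · have hc : 0 < log (S / K) / σ := div_pos (log_pos ((one_lt_div hK).2 h)) hσ
    rw [Real.sign_of_pos hc, min_eq_right h.le]
    ring

/-- As τ → 0⁺ the RMM-01 LPT value V(τ) = S·Φ(−d1(τ)) + K·Φ(d2(τ)) tends to the
covered call payoff min(S, K). -/
theorem lpt_value_tendsto_covered_call (S K σ : ℝ) (hS : 0 < S) (hK : 0 < K) (hσ : 0 < σ)
    (d1 d2 V : ℝ → ℝ)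
    (hd1 : ∀ τ, d1 τ = (Real.log (S / K) + (σ ^ 2 / 2) * τ) / (σ * Real.sqrt τ))
    (hd2 : ∀ τ, d2 τ = d1 τ - σ * Real.sqrt τ)
    (hV : ∀ τ, V τ = S * Φ (-(d1 τ)) + K * Φ (d2 τ)) :
    Filter.Tendsto V (nhdsWithin 0 (Set.Ioi 0)) (nhds (min S K)) := by
  set c := log (S / K) / σ with hc
  have hd1_sqrt : ∀ τ > 0, d1 τ = c * (√τ)⁻¹ + (σ / 2) * √τ := fun τ hτ => by
    have := sqrt_pos.2 hτ
    rw [hd1, hc]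
    field_simp
    rw [sq_sqrt hτ.le]
  have hV_sqrt : V =ᶠ[𝓝[>] 0]
      fun τ => S * Φ (-c * (√τ)⁻¹ + -(σ / 2) * √τ) + K * Φ (c * (√τ)⁻¹ + -(σ / 2) * √τ) := by
    filter_upwards [self_mem_nhdsWithin] with τ hτ
    rw [hV, hd2, hd1_sqrt τ hτ]
    ring_nf
  rw [← mul_add_mul_sign_log_div_eq_min hS hK hσ]
  have hlim := ((tendsto_Phi_mul_inv_add_mul (-c) (-(σ / 2))).const_mul S).add
    ((tendsto_Phi_mul_inv_add_mul c (-(σ / 2))).const_mul K)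
  exact (hlim.comp tendsto_sqrt_nhdsGT_zero).congr' hV_sqrt.symm
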